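/- Minimum rank PSD completion (Dancis): If a partial symmetric matrix X with chordal sparsity pattern E admits a PSD completion, then it admits a PSD completion whose rank equals the maximum over all maximal cliques C_k of rank(X[C_k,C_k]). -/

import Mathlib

/-- A graph is chordal if every cycle of length at least 4 has a chord. -/
def IsChordal {V : Type*} (G : SimpleGraph V) : Prop :=
  ∀ (v : V) (w : G.Walk v v), w.IsCycle → 4 ≤ w.length →
    ∃ x y, G.Adj x y ∧ x ∈ w.support ∧ y ∈ w.support ∧ s(x, y) ∉ w.edges

/-- A maximal clique: a clique not properly contained in any other clique. -/
def IsMaxClique {V : Type*} (G : SimpleGraph V) (s : Set V) : Prop :=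
  G.IsClique s ∧ ∀ t : Set V, G.IsClique t → s ⊆ t → s = t

/-- `X` has a PSD completion respecting the sparsity pattern given by the graph `G`. -/
def HasPSDCompletion {n : ℕ} (G : SimpleGraph (Fin n)) (X : Matrix (Fin n) (Fin n) ℝ) :
    Prop :=
  ∃ Y : Matrix (Fin n) (Fin n) ℝ, Y.PosSemidef ∧ (∀ i, Y i i = X i i) ∧
    ∀ i j, G.Adj i j → Y i j = X i j

/-!
A positive semidefinite matrix of rank at most `r` is the Gram matrix of vectors in `ℝ^r`, so
with `r = max_C rank X[C, C]` every clique block of `X` is realized by vectors in `ℝ^r`. These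
local realizations are glued one vertex at a time: a chordal graph has a simplicial vertex `v`
(Dirac; a minimum vertex separator of a chordal graph is a clique), `G - v` is realized by
induction, and the realizations of `G - v` and of the clique `N[v]` have the same
Gram matrix on `N(v)`, so an isometry of `ℝ^r` carries one onto the other. The Gram matrix of
the glued vectors is a PSD completion of rank at most `r`, and at least `r` because it contains
every `X[C, C]` as a principal submatrix.
-/

open Matrix Module Submodule
open scoped InnerProductSpace ComplexOrder

section Gram

variable {𝕜 : Type*} [RCLike 𝕜] {E : Type*} [NormedAddCommGroup E] [InnerProductSpace 𝕜 E]

theorem norm_linearCombination_eq_of_gram_eq {ι : Type*} [Fintype ι] {u w : ι → E}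
    (h : gram 𝕜 u = gram 𝕜 w) (c : ι → 𝕜) :
    ‖Fintype.linearCombination 𝕜 u c‖ = ‖Fintype.linearCombination 𝕜 w c‖ := by
  have hinner : ∀ v : ι → E,
      ⟪Fintype.linearCombination 𝕜 v c, Fintype.linearCombination 𝕜 v c⟫_𝕜 =
        ∑ i, ∑ j, (starRingEnd 𝕜) (c i) * c j * gram 𝕜 v i j := by
    intro v
    simp only [Fintype.linearCombination_apply, sum_inner, inner_sum, inner_smul_left,
      inner_smul_right, gram_apply, Finset.mul_sum]
    rw [Finset.sum_comm]
    exact Finset.sum_congr rfl fun i _ => Finset.sum_congr rfl fun j _ => by ring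
  have hsq := congrArg RCLike.re ((hinner u).trans (h ▸ (hinner w).symm))
  rw [inner_self_eq_norm_sq, inner_self_eq_norm_sq] at hsq
  exact (sq_eq_sq₀ (norm_nonneg _) (norm_nonneg _)).mp hsq

variable [FiniteDimensional 𝕜 E]

theorem exists_linearIsometry_of_finrank_le {W : Type*} [NormedAddCommGroup W]
    [InnerProductSpace 𝕜 W] [FiniteDimensional 𝕜 W] (h : finrank 𝕜 W ≤ finrank 𝕜 E) :
    Nonempty (W →ₗᵢ[𝕜] E) := by
  let b := stdOrthonormalBasis 𝕜 W
  let e := stdOrthonormalBasis 𝕜 E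
  let f := b.toBasis.constr 𝕜 (e ∘ Fin.castLE h)
  refine ⟨f.isometryOfOrthonormal (v := b.toBasis) (by simp) ?_⟩
  have : f ∘ b.toBasis = e ∘ Fin.castLE h := funext fun i => b.toBasis.constr_basis 𝕜 _ i
  rw [this]
  exact e.orthonormal.comp _ (Fin.castLE_injective h)

theorem Matrix.rank_gram {n : Type*} [Fintype n] (v : n → E) :
    (gram 𝕜 v).rank = finrank 𝕜 (span 𝕜 (Set.range v)) := by
  let b := stdOrthonormalBasis 𝕜 E
  rw [gram_eq_conjTranspose_mul b, rank_conjTranspose_mul_self, rank_eq_finrank_span_cols]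
  have : (of fun i j => b.repr (v j) i).col = b.toBasis.equivFun ∘ v := by
    ext j i; simp
  rw [this, Set.range_comp, ← LinearEquiv.coe_toLinearMap, Submodule.span_image,
    LinearEquiv.finrank_map_eq]

theorem Matrix.rank_gram_le {n : Type*} [Fintype n] (v : n → E) :
    (gram 𝕜 v).rank ≤ finrank 𝕜 E := by
  rw [rank_gram]
  exact Submodule.finrank_le _

open scoped MatrixOrder in
theorem Matrix.PosSemidef.exists_gram_eq {n : Type*} [Fintype n] {M : Matrix n n 𝕜}
    (hM : M.PosSemidef) (hr : M.rank ≤ finrank 𝕜 E) : ∃ v : n → E, gram 𝕜 v = M := by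
  classical
  obtain ⟨B, rfl⟩ := CStarAlgebra.nonneg_iff_eq_star_mul_self.mp hM.nonneg
  let v₀ : n → EuclideanSpace 𝕜 n := fun j => WithLp.toLp 2 (fun i => B i j)
  have hv₀ : gram 𝕜 v₀ = star B * B := by
    ext i j
    simp [v₀, mul_apply, PiLp.inner_apply, mul_comm]
  rw [← hv₀, rank_gram] at hr
  obtain ⟨L⟩ := exists_linearIsometry_of_finrank_le hr
  refine ⟨fun i => L ⟨v₀ i, subset_span ⟨i, rfl⟩⟩, ?_⟩
  rw [← hv₀]
  ext i j
  simp [L.inner_map_map]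

theorem exists_linearIsometry_comp_eq_of_gram_eq {ι : Type*} [Finite ι] {u w : ι → E}
    (h : gram 𝕜 u = gram 𝕜 w) : ∃ Q : E →ₗᵢ[𝕜] E, Q ∘ u = w := by
  classical
  have := Fintype.ofFinite ι
  set L₁ := Fintype.linearCombination 𝕜 u
  set L₂ := Fintype.linearCombination 𝕜 w
  have hker : LinearMap.ker L₁ ≤ LinearMap.ker L₂ := fun c hc => by
    rw [LinearMap.mem_ker, ← norm_eq_zero, ← norm_linearCombination_eq_of_gram_eq h,
      norm_eq_zero, ← LinearMap.mem_ker]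
    exact hc
  -- `L₁ c ↦ L₂ c`, well defined on the range of `L₁` because `ker L₁ ≤ ker L₂`
  let T := (LinearMap.ker L₁).liftQ L₂ hker ∘ₗ L₁.quotKerEquivRange.symm.toLinearMap
  have hT : ∀ c, T ⟨L₁ c, LinearMap.mem_range_self _ c⟩ = L₂ c := fun c => by
    simp [T, LinearMap.quotKerEquivRange_symm_apply_image]
  let L : LinearMap.range L₁ →ₗᵢ[𝕜] E := ⟨T, by
    rintro ⟨_, c, rfl⟩
    rw [hT, ← norm_linearCombination_eq_of_gram_eq h]; rfl⟩
  refine ⟨L.extend, funext fun i => ?_⟩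
  have hu : L₁ (Pi.single i 1) = u i := by simp [L₁]
  have hw : L₂ (Pi.single i 1) = w i := by simp [L₂]
  calc L.extend (u i) = L ⟨L₁ (Pi.single i 1), LinearMap.mem_range_self _ _⟩ := by
        rw [← L.extend_apply]; simp only [hu]
    _ = w i := (hT _).trans hw

end Gram

namespace SimpleGraph

variable {V : Type*} {G : SimpleGraph V}

namespace Walk

theorem mem_edges_of_length_eq_one {u v : V} :
    ∀ {p : G.Walk u v}, p.length = 1 → s(u, v) ∈ p.edges
  | cons _ nil, _ => by simp

theorem exists_length_lt_of_adj_of_mem_support {x u y v : V} (p₁ : G.Walk x u) (p₂ : G.Walk u y)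
    (huv : G.Adj u v) (hv : v ∈ p₂.support) (he : s(u, v) ∉ p₂.edges) :
    ∃ q : G.Walk x y, q.length < p₁.length + p₂.length ∧
      ∀ z ∈ q.support, z ∈ p₁.support ∨ z ∈ p₂.support := by
  classical
  refine ⟨p₁.append (cons huv (p₂.dropUntil v hv)), ?_, fun z hz => ?_⟩
  · have hlen := congrArg length (p₂.take_spec hv)
    have h0 : (p₂.takeUntil v hv).length ≠ 0 := fun h => huv.ne (eq_of_length_eq_zero h)
    have h1 : (p₂.takeUntil v hv).length ≠ 1 := fun h =>
      he (p₂.edges_takeUntil_subset_edges hv (mem_edges_of_length_eq_one h))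
    simp only [length_append, length_cons] at hlen ⊢
    omega
  · simp only [mem_support_append_iff, support_cons, List.mem_cons] at hz
    rcases hz with hz | rfl | hz
    · exact .inl hz
    · exact .inr p₂.start_mem_support
    · exact .inr (p₂.support_dropUntil_subset_support hv hz)

theorem exists_length_lt_of_isChord {x y u v : V} {p : G.Walk x y} (hc : p.IsChord s(u, v)) :
    ∃ q : G.Walk x y, q.length < p.length ∧ q.support ⊆ p.support := by
  classical
  obtain ⟨huv, he, hu, hv⟩ := isChord_sym2Mk.mp hc
  have hsplit := p.take_spec hu
  have hlen : p.length = (p.takeUntil u hu).length + (p.dropUntil u hu).length := by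
    rw [← length_append, hsplit]
  have hmem : ∀ z, z ∈ p.support ↔
      z ∈ (p.takeUntil u hu).support ∨ z ∈ (p.dropUntil u hu).support := fun z => by
    rw [← mem_support_append_iff, hsplit]
  by_cases hvd : v ∈ (p.dropUntil u hu).support
  · obtain ⟨q, hq, hsub⟩ := exists_length_lt_of_adj_of_mem_support _ _ huv hvd
      fun h => he (p.edges_dropUntil_subset_edges hu h)
    exact ⟨q, hlen ▸ hq, fun z hz => (hmem z).mpr (hsub z hz)⟩
  · have hvt : v ∈ (p.takeUntil u hu).reverse.support := by
      simpa [hvd] using (hmem v).mp hv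
    obtain ⟨q, hq, hsub⟩ := exists_length_lt_of_adj_of_mem_support
      (p.dropUntil u hu).reverse _ huv hvt
      fun h => he (p.edges_takeUntil_subset_edges hu (by simpa using h))
    refine ⟨q.reverse, by simp only [length_reverse] at hq ⊢; omega, fun z hz => ?_⟩
    rw [support_reverse, List.mem_reverse] at hz
    simpa [hmem, or_comm] using hsub z hz

theorem exists_isPath_isChordless {x y : V} (p : G.Walk x y) :
    ∃ q : G.Walk x y, q.IsPath ∧ q.IsChordless ∧ q.support ⊆ p.support := by
  classical
  have hex : ∃ k, ∃ q : G.Walk x y, q.IsPath ∧ q.support ⊆ p.support ∧ q.length = k :=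
    ⟨_, p.bypass, p.bypass_isPath, p.support_bypass_subset_support, rfl⟩
  obtain ⟨q, hq, hsub, hlen⟩ := Nat.find_spec hex
  refine ⟨q, hq, fun e he => ?_, hsub⟩
  induction e using Sym2.ind with | _ u v => ?_
  obtain ⟨q', hlt, hsub'⟩ := exists_length_lt_of_isChord he
  have := Nat.find_min' hex ⟨q'.bypass, q'.bypass_isPath,
    fun z hz => hsub (hsub' (q'.support_bypass_subset_support hz)), rfl⟩
  have := q'.length_bypass_le_length
  omega

theorem two_le_length {x y : V} (hxy : x ≠ y) (h : ¬G.Adj x y) (p : G.Walk x y) :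
    2 ≤ p.length := by
  cases p with
  | nil => exact absurd rfl hxy
  | cons ha p' => cases p' with
    | nil => exact absurd ha h
    | cons => simp

theorem IsPath.start_notMem_support_tail {x y : V} {p : G.Walk x y} (hp : p.IsPath) :
    x ∉ p.support.tail := by
  have := hp.support_nodup
  rw [← cons_tail_support] at this
  exact (List.nodup_cons.mp this).1

theorem IsPath.isCycle_append_reverse {x y : V} {p q : G.Walk x y} (hp : p.IsPath)
    (hq : q.IsPath) (hpq : ∀ z ∈ p.support, z ∈ q.support → z = x ∨ z = y)
    (hlen : 2 ≤ p.length) : (p.append q.reverse).IsCycle := by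
  refine hp.isCycle_append hq.reverse (fun z hzp hzq => ?_) (by omega)
  have hzx : z ≠ x := fun h => hp.start_notMem_support_tail (h ▸ hzp)
  have hzy : z ≠ y := fun h => hq.reverse.start_notMem_support_tail (h ▸ hzq)
  have hzq' : z ∈ q.support := by
    simpa using List.mem_of_mem_tail hzq
  rcases hpq z (List.mem_of_mem_tail hzp) hzq' with h | h
  exacts [hzx h, hzy h]

theorem IsChordless.append_reverse {x y : V} {p q : G.Walk x y} (hp : p.IsChordless)
    (hq : q.IsChordless)
    (hpq : ∀ u ∈ p.support, ∀ v ∈ q.support,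
      u ∉ q.support → v ∉ p.support → ¬G.Adj u v) :
    (p.append q.reverse).IsChordless := by
  have hcross : ∀ u v, G.Adj u v → u ∈ p.support → v ∈ q.support →
      s(u, v) ∈ p.edges ∨ s(u, v) ∈ q.edges := by
    intro u v huv hu hv
    by_cases hvp : v ∈ p.support
    · exact .inl (hp.mem_edges hu hvp huv)
    by_cases huq : u ∈ q.support
    · exact .inr (hq.mem_edges huq hv huv)
    exact absurd huv (hpq u hu v hv huq hvp)
  refine isChordless_iff_forall_mem_edges.mpr fun u v hu hv huv => ?_
  simp only [mem_support_append_iff, support_reverse, List.mem_reverse] at hu hv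
  simp only [edges_append, edges_reverse, List.mem_append, List.mem_reverse]
  rcases hu with hu | hu <;> rcases hv with hv | hv
  · exact .inl (hp.mem_edges hu hv huv)
  · exact hcross u v huv hu hv
  · simpa [Sym2.eq_swap] using hcross v u huv.symm hv hu
  · exact .inr (hq.mem_edges hu hv huv)

end Walk

def reachAvoiding (G : SimpleGraph V) (S : Finset V) (a : V) : Set V :=
  {x | ∃ w : G.Walk a x, ∀ z ∈ w.support, z ∉ S}

def Separates (G : SimpleGraph V) (S : Finset V) (a b : V) : Prop :=
  a ∉ S ∧ b ∉ S ∧ b ∉ G.reachAvoiding S a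

def IsSimplicial (G : SimpleGraph V) (v : V) : Prop :=
  G.IsClique (G.neighborSet v)

section reachAvoiding

variable {S : Finset V} {a b c x y : V}

open Walk

theorem mem_reachAvoiding_self (ha : a ∉ S) : a ∈ G.reachAvoiding S a :=
  ⟨nil, by simpa using ha⟩

theorem notMem_of_mem_reachAvoiding (hx : x ∈ G.reachAvoiding S a) : x ∉ S :=
  let ⟨w, hw⟩ := hx
  hw x w.end_mem_support

theorem mem_reachAvoiding_of_mem_support {w : G.Walk a x} (hw : ∀ z ∈ w.support, z ∉ S)
    {z : V} (hz : z ∈ w.support) : z ∈ G.reachAvoiding S a := by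
  classical
  exact ⟨w.takeUntil z hz, fun y hy => hw y (w.support_takeUntil_subset_support hz hy)⟩

theorem mem_reachAvoiding_comm (hx : x ∈ G.reachAvoiding S a) : a ∈ G.reachAvoiding S x :=
  let ⟨w, hw⟩ := hx
  ⟨w.reverse, by simpa using hw⟩

theorem mem_reachAvoiding_trans (hx : x ∈ G.reachAvoiding S a) (hy : y ∈ G.reachAvoiding S x) :
    y ∈ G.reachAvoiding S a :=
  let ⟨w, hw⟩ := hx
  let ⟨w', hw'⟩ := hy
  ⟨w.append w', fun z hz => ((mem_support_append_iff _ _).mp hz).elim (hw z) (hw' z)⟩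

theorem mem_reachAvoiding_of_adj (hx : x ∈ G.reachAvoiding S a) (hy : y ∉ S) (h : G.Adj x y) :
    y ∈ G.reachAvoiding S a :=
  mem_reachAvoiding_trans hx ⟨h.toWalk, by simpa using ⟨notMem_of_mem_reachAvoiding hx, hy⟩⟩

theorem neighborSet_subset_reachAvoiding_union (hx : x ∈ G.reachAvoiding S a) :
    G.neighborSet x ⊆ G.reachAvoiding S a ∪ S := fun z hz => by
  by_cases hzS : z ∈ S
  exacts [.inr hzS, .inl (mem_reachAvoiding_of_adj hx hzS hz)]

theorem exists_adj_of_walk (w : G.Walk a b) (ha : a ∉ S) (hw : ∃ z ∈ w.support, z ∈ S) :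
    ∃ x ∈ G.reachAvoiding S a, ∃ s ∈ w.support, s ∈ S ∧ G.Adj x s := by
  induction w with
  | nil =>
    obtain ⟨z, hz, hzS⟩ := hw
    exact absurd (List.mem_singleton.mp hz ▸ hzS) ha
  | @cons a a' _ h p ih =>
    by_cases ha' : a' ∈ S
    · exact ⟨a, mem_reachAvoiding_self ha, a', by simp, ha', h⟩
    obtain ⟨z, hz, hzS⟩ := hw
    rw [support_cons, List.mem_cons] at hz
    obtain ⟨x, hx, s, hs, hsS, hxs⟩ :=
      ih ha' ⟨z, hz.resolve_left (by rintro rfl; exact ha hzS), hzS⟩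
    have ha'R := mem_reachAvoiding_of_adj (mem_reachAvoiding_self ha) ha' h
    exact ⟨x, mem_reachAvoiding_trans ha'R hx, s, by simp [hs], hsS, hxs⟩

theorem exists_walk_of_mem_reachAvoiding {x' y' : V} (hx' : x' ∈ G.reachAvoiding S c)
    (hy' : y' ∈ G.reachAvoiding S c) (hx : G.Adj x x') (hy : G.Adj y' y) :
    ∃ p : G.Walk x y, ∀ z ∈ p.support, z = x ∨ z = y ∨ z ∈ G.reachAvoiding S c := by
  obtain ⟨wx, hwx⟩ := hx'
  obtain ⟨wy, hwy⟩ := hy'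
  refine ⟨cons hx ((wx.reverse.append wy).concat hy), fun z hz => ?_⟩
  simp only [support_cons, support_concat, mem_support_append_iff, support_reverse,
    List.mem_cons, List.mem_append, List.mem_reverse, List.not_mem_nil, or_false] at hz
  rcases hz with rfl | (hz | hz) | rfl
  · exact .inl rfl
  · exact .inr (.inr (mem_reachAvoiding_of_mem_support hwx hz))
  · exact .inr (.inr (mem_reachAvoiding_of_mem_support hwy hz))
  · exact .inr (.inl rfl)

end reachAvoiding

namespace Separates

variable {S : Finset V} {a b x y : V}

theorem symm (h : G.Separates S a b) : G.Separates S b a :=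
  ⟨h.2.1, h.1, fun hb => h.2.2 (mem_reachAvoiding_comm hb)⟩

theorem ne_and_not_adj (h : G.Separates S a b) (hx : x ∈ G.reachAvoiding S a)
    (hy : y ∈ G.reachAvoiding S b) : x ≠ y ∧ ¬G.Adj x y := by
  refine ⟨?_, fun hxy => ?_⟩
  · rintro rfl
    exact h.2.2 (mem_reachAvoiding_trans hx (mem_reachAvoiding_comm hy))
  · have := mem_reachAvoiding_of_adj hx (notMem_of_mem_reachAvoiding hy) hxy
    exact h.2.2 (mem_reachAvoiding_trans this (mem_reachAvoiding_comm hy))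

theorem exists_adj_of_minimal [DecidableEq V] (h : G.Separates S a b)
    (hmin : ∀ S', G.Separates S' a b → S.card ≤ S'.card) {s : V} (hs : s ∈ S) :
    ∃ x ∈ G.reachAvoiding S a, G.Adj x s := by
  have hb : b ∈ G.reachAvoiding (S.erase s) a := by
    by_contra hb
    refine (Finset.card_erase_lt_of_mem hs).not_ge (hmin _ ⟨?_, ?_, hb⟩)
    exacts [fun ha => h.1 (Finset.mem_of_mem_erase ha),
      fun hb => h.2.1 (Finset.mem_of_mem_erase hb)]
  obtain ⟨w, hw⟩ := hb
  have hmeet : ∃ z ∈ w.support, z ∈ S := by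
    by_contra! hw'
    exact h.2.2 ⟨w, hw'⟩
  obtain ⟨x, hx, t, ht, htS, hxt⟩ := exists_adj_of_walk w h.1 hmeet
  obtain rfl : t = s := by
    by_contra hts
    exact hw t ht (Finset.mem_erase.mpr ⟨hts, htS⟩)
  exact ⟨x, hx, hxt⟩

end Separates

theorem exists_separates_minimal [Finite V] {a b : V} (hab : a ≠ b) (h : ¬G.Adj a b) :
    ∃ S : Finset V, G.Separates S a b ∧ ∀ S', G.Separates S' a b → S.card ≤ S'.card := by
  classical
  have := Fintype.ofFinite V
  have h₀ : G.Separates (Finset.univ \ {a, b}) a b := by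
    refine ⟨by simp, by simp, fun ⟨w, hw⟩ => ?_⟩
    cases w with
    | nil => exact hab rfl
    | @cons _ v _ hav p =>
      obtain rfl | hva := eq_or_ne v a
      · exact G.loopless.irrefl _ hav
      · have hvb : v = b := by simpa [hva] using hw v (by simp)
        exact h (hvb ▸ hav)
  obtain ⟨S, hS, hmin⟩ := Finset.exists_min_image
    (Finset.univ.filter (G.Separates · a b)) Finset.card ⟨_, by simpa using h₀⟩
  exact ⟨S, by simpa using hS, fun S' h' => hmin S' (by simpa using h')⟩

theorem IsSimplicial.of_induce {W : Set V} {v : W} (hv : (G.induce W).IsSimplicial v)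
    (hN : G.neighborSet v ⊆ W) : G.IsSimplicial v := fun y hy z hz hyz =>
  hv (show ⟨y, hN hy⟩ ∈ _ from hy) (show ⟨z, hN hz⟩ ∈ _ from hz)
    fun h => hyz congr(($h).1)

theorem exists_isSimplicial_mem_reachAvoiding {S : Finset V} {c : V} (hc : c ∉ S)
    (hS : G.IsClique (S : Set V))
    (hW : G.induce (G.reachAvoiding S c ∪ S) = ⊤ ∨ ∃ a b, a ≠ b ∧
      ¬(G.induce (G.reachAvoiding S c ∪ S)).Adj a b ∧
      (G.induce (G.reachAvoiding S c ∪ S)).IsSimplicial a ∧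
      (G.induce (G.reachAvoiding S c ∪ S)).IsSimplicial b) :
    ∃ v ∈ G.reachAvoiding S c, G.IsSimplicial v := by
  have hc' := mem_reachAvoiding_self (G := G) hc
  rcases hW with htop | ⟨a, b, hab, hnadj, ha, hb⟩
  · exact ⟨c, hc', (induce_eq_top.mp htop).subset (neighborSet_subset_reachAvoiding_union hc')⟩
  -- `a` and `b` are not adjacent, so they cannot both lie in the clique `S`
  have : (a : V) ∈ G.reachAvoiding S c ∨ (b : V) ∈ G.reachAvoiding S c := by
    by_contra! h
    exact hnadj (hS (a.2.resolve_left h.1) (b.2.resolve_left h.2) (Subtype.coe_ne_coe.mpr hab))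
  rcases this with h | h
  exacts [⟨a, h, ha.of_induce (neighborSet_subset_reachAvoiding_union h)⟩,
    ⟨b, h, hb.of_induce (neighborSet_subset_reachAvoiding_union h)⟩]

end SimpleGraph

open SimpleGraph

variable {V : Type*} {G : SimpleGraph V}

theorem IsChordal.induce (hG : IsChordal G) (s : Set V) : IsChordal (G.induce s) := by
  intro v w hw hlen
  let f : G.induce s ↪g G := Embedding.induce s
  obtain ⟨x, y, hadj, hx, hy, hne⟩ := hG _ (w.map f.toHom) (hw.map f.injective)
    (by rwa [Walk.length_map])
  rw [Walk.support_map] at hx hy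
  obtain ⟨x', hx', rfl⟩ := List.mem_map.mp hx
  obtain ⟨y', hy', rfl⟩ := List.mem_map.mp hy
  refine ⟨x', y', hadj, hx', hy', fun hmem => hne ?_⟩
  rw [Walk.edges_map]
  exact List.mem_map_of_mem hmem

theorem IsChordal.not_isChordless (hG : IsChordal G) {v : V} {c : G.Walk v v} (hc : c.IsCycle)
    (hlen : 4 ≤ c.length) : ¬c.IsChordless := by
  obtain ⟨x, y, hxy, hx, hy, he⟩ := hG v c hc hlen
  exact fun h => he (h.mem_edges hx hy hxy)

theorem IsChordal.adj_of_walks (hG : IsChordal G) {A B : Set V}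
    (hAB : ∀ a ∈ A, ∀ b ∈ B, a ≠ b ∧ ¬G.Adj a b) {x y : V} (hxy : x ≠ y)
    (p q : G.Walk x y) (hp : ∀ z ∈ p.support, z = x ∨ z = y ∨ z ∈ A)
    (hq : ∀ z ∈ q.support, z = x ∨ z = y ∨ z ∈ B) : G.Adj x y := by
  by_contra hnadj
  obtain ⟨p', hp'P, hp'C, hp'S⟩ := p.exists_isPath_isChordless
  obtain ⟨q', hq'P, hq'C, hq'S⟩ := q.exists_isPath_isChordless
  have hp'len := p'.two_le_length hxy hnadj
  have hq'len := q'.two_le_length hxy hnadj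
  refine hG.not_isChordless (hp'P.isCycle_append_reverse hq'P ?_ hp'len)
    (by simp only [Walk.length_append, Walk.length_reverse]; omega)
    (hp'C.append_reverse hq'C fun u hu v hv huq hvp => ?_)
  · intro z hzp hzq
    rcases hp z (hp'S hzp) with h | h | hzA
    · exact .inl h
    · exact .inr h
    rcases hq z (hq'S hzq) with h | h | hzB
    · exact .inl h
    · exact .inr h
    exact absurd rfl (hAB z hzA z hzB).1
  · have huA : u ∈ A := by
      rcases hp u (hp'S hu) with rfl | rfl | h
      exacts [absurd q'.start_mem_support huq, absurd q'.end_mem_support huq, h]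
    have hvB : v ∈ B := by
      rcases hq v (hq'S hv) with rfl | rfl | h
      exacts [absurd p'.start_mem_support hvp, absurd p'.end_mem_support hvp, h]
    exact (hAB u huA v hvB).2

theorem IsChordal.isClique_of_separates_minimal (hG : IsChordal G) {S : Finset V} {a b : V}
    (h : G.Separates S a b) (hmin : ∀ S', G.Separates S' a b → S.card ≤ S'.card) :
    G.IsClique (S : Set V) := by
  classical
  intro x hx y hy hxy
  have hmin' : ∀ S', G.Separates S' b a → S.card ≤ S'.card := fun S' h' => hmin S' h'.symm
  obtain ⟨xa, hxa, hxa'⟩ := h.exists_adj_of_minimal hmin hx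
  obtain ⟨ya, hya, hya'⟩ := h.exists_adj_of_minimal hmin hy
  obtain ⟨xb, hxb, hxb'⟩ := h.symm.exists_adj_of_minimal hmin' hx
  obtain ⟨yb, hyb, hyb'⟩ := h.symm.exists_adj_of_minimal hmin' hy
  obtain ⟨p, hp⟩ := exists_walk_of_mem_reachAvoiding hxa hya hxa'.symm hya'
  obtain ⟨q, hq⟩ := exists_walk_of_mem_reachAvoiding hxb hyb hxb'.symm hyb'
  exact hG.adj_of_walks (fun u hu v hv => h.ne_and_not_adj hu hv) hxy p q hp hq

theorem IsChordal.eq_top_or_exists_isSimplicial [Finite V] (hG : IsChordal G) :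
    G = ⊤ ∨ ∃ a b, a ≠ b ∧ ¬G.Adj a b ∧ G.IsSimplicial a ∧ G.IsSimplicial b := by
  induction hn : Nat.card V using Nat.strong_induction_on generalizing V with
  | _ n ih =>
  by_cases htop : G = ⊤
  · exact .inl htop
  obtain ⟨a, b, hab, hnadj⟩ : ∃ a b, a ≠ b ∧ ¬G.Adj a b := by
    by_contra! h
    exact htop (SimpleGraph.ext (funext₂ fun a b => propext ⟨fun h' => h'.ne, h a b⟩))
  obtain ⟨S, hsep, hmin⟩ := exists_separates_minimal hab hnadj
  have key : ∀ {c d}, G.Separates S c d → ∃ v ∈ G.reachAvoiding S c, G.IsSimplicial v :=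
    fun {c d} h => exists_isSimplicial_mem_reachAvoiding h.1
      (hG.isClique_of_separates_minimal hsep hmin)
      (ih _ (hn ▸ Finite.card_subtype_lt (x := d)
        (by rintro (hd | hd); exacts [h.2.2 hd, h.2.1 hd])) (hG.induce _) rfl)
  obtain ⟨va, hva, hsa⟩ := key hsep
  obtain ⟨vb, hvb, hsb⟩ := key hsep.symm
  obtain ⟨hne, hnadj'⟩ := hsep.ne_and_not_adj hva hvb
  exact .inr ⟨va, vb, hne, hnadj', hsa, hsb⟩

theorem IsChordal.exists_isSimplicial [Finite V] [Nonempty V] (hG : IsChordal G) :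
    ∃ v, G.IsSimplicial v := by
  rcases hG.eq_top_or_exists_isSimplicial with rfl | ⟨a, _, _, _, ha, _⟩
  exacts [⟨Classical.arbitrary V, (isClique_univ.mpr rfl).subset (Set.subset_univ _)⟩,
    ⟨a, ha⟩]

theorem exists_isMaxClique_superset [Finite V] {s : Set V} (hs : G.IsClique s) :
    ∃ C : Finset V, s ⊆ C ∧ IsMaxClique G C := by
  classical
  have := Fintype.ofFinite V
  obtain ⟨C, hsC, hC⟩ := Finite.exists_le_maximal (p := G.IsClique) hs
  refine ⟨C.toFinset, by simpa using hsC, ?_⟩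
  rw [Set.coe_toFinset]
  exact ⟨hC.1, fun t ht hCt => hCt.antisymm (hC.2 ht hCt)⟩

theorem Matrix.submatrix_eq_of_isClique {R : Type*} {X Y : Matrix V V R}
    (hdiag : ∀ i, Y i i = X i i) (hadj : ∀ i j, G.Adj i j → Y i j = X i j) {s : Finset V}
    (hs : G.IsClique (s : Set V)) :
    Y.submatrix (fun c : s => (c : V)) (fun c : s => (c : V)) =
      X.submatrix (fun c : s => (c : V)) (fun c : s => (c : V)) := by
  ext i j
  obtain h | h := eq_or_ne (i : V) j
  · simp [h, hdiag]
  · exact hadj _ _ (hs i.2 j.2 h)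

section Realization

variable {𝕜 : Type*} [RCLike 𝕜] {E : Type*} [NormedAddCommGroup E] [InnerProductSpace 𝕜 E]
  [FiniteDimensional 𝕜 E]

theorem exists_inner_eq_of_isSimplicial [Finite V] {v : V} (hv : G.IsSimplicial v)
    {X : Matrix V V 𝕜} {f' : ({v}ᶜ : Set V) → E}
    (hf' : ∀ i j : ({v}ᶜ : Set V), (i = j ∨ G.Adj i j) → ⟪f' i, f' j⟫_𝕜 = X i j)
    {g : (insert v (G.neighborSet v) : Set V) → E} (hg : gram 𝕜 g = X.submatrix (↑) (↑)) :
    ∃ f : V → E, ∀ i j, (i = j ∨ G.Adj i j) → ⟪f i, f j⟫_𝕜 = X i j := by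
  classical
  have hN : ∀ x ∈ G.neighborSet v, x ∈ ({v}ᶜ : Set V) := fun x hx => (G.ne_of_adj hx).symm
  have hgram : gram 𝕜 (fun x : G.neighborSet v => g ⟨x, Set.mem_insert_of_mem _ x.2⟩) =
      gram 𝕜 (fun x : G.neighborSet v => f' ⟨x, hN x x.2⟩) := by
    ext i j
    have hij : (⟨i, hN i i.2⟩ : ({v}ᶜ : Set V)) = ⟨j, hN j j.2⟩ ∨ G.Adj i j := by
      by_cases h : i = j
      exacts [.inl (by rw [h]), .inr (hv i.2 j.2 (Subtype.coe_ne_coe.mpr h))]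
    exact (congrFun₂ hg _ _).trans (hf' _ _ hij).symm
  obtain ⟨Q, hQ⟩ := exists_linearIsometry_comp_eq_of_gram_eq hgram
  let f : V → E := fun x => if h : x = v then Q (g ⟨v, Set.mem_insert v _⟩) else f' ⟨x, h⟩
  have hfQ : ∀ x (hx : x ∈ insert v (G.neighborSet v)), f x = Q (g ⟨x, hx⟩) := by
    rintro x (rfl | hx)
    · simp [f]
    · simp only [f, dif_neg (show x ≠ v from hN x hx)]
      exact (congrFun hQ ⟨x, hx⟩).symm
  refine ⟨f, fun i j hij => ?_⟩
  by_cases hv' : i = v ∨ j = v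
  · have hi : i ∈ insert v (G.neighborSet v) := by
      rcases hv' with rfl | rfl
      exacts [.inl rfl, hij.elim (fun h => .inl h) fun h => .inr h.symm]
    have hj : j ∈ insert v (G.neighborSet v) := by
      rcases hv' with rfl | rfl
      exacts [hij.elim (fun h => .inl h.symm) fun h => .inr h, .inl rfl]
    rw [hfQ i hi, hfQ j hj, Q.inner_map_map]
    exact congrFun₂ hg ⟨i, hi⟩ ⟨j, hj⟩
  · rw [not_or] at hv'
    simpa [f, hv'] using hf' ⟨i, hv'.1⟩ ⟨j, hv'.2⟩ (hij.imp Subtype.ext id)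

theorem IsChordal.exists_inner_eq [Finite V] (hG : IsChordal G) {X : Matrix V V 𝕜}
    (hX : ∀ s : Set V, G.IsClique s → ∃ g : s → E, gram 𝕜 g = X.submatrix (↑) (↑)) :
    ∃ f : V → E, ∀ i j, (i = j ∨ G.Adj i j) → ⟪f i, f j⟫_𝕜 = X i j := by
  induction hn : Nat.card V using Nat.strong_induction_on generalizing V with
  | _ n ih =>
  rcases isEmpty_or_nonempty V with hV | hV
  · exact ⟨fun _ => 0, fun i => isEmptyElim i⟩
  obtain ⟨v, hv⟩ := hG.exists_isSimplicial
  have hX' : ∀ s : Set ({v}ᶜ : Set V), (G.induce {v}ᶜ).IsClique s →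
      ∃ g : s → E, gram 𝕜 g = (X.submatrix Subtype.val Subtype.val).submatrix
        (Subtype.val : s → _) Subtype.val := by
    intro s hs
    obtain ⟨g, hg⟩ := hX _ (isClique_induce_iff.mp hs)
    let φ : s → Subtype.val '' s := fun x => ⟨x.1.1, x.1, x.2, rfl⟩
    refine ⟨g ∘ φ, ?_⟩
    rw [show gram 𝕜 (g ∘ φ) = (gram 𝕜 g).submatrix φ φ from rfl, hg]
    rfl
  obtain ⟨f', hf'⟩ :=
    ih _ (hn ▸ Finite.card_subtype_lt (x := v) (by simp)) (hG.induce _) hX' rfl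
  obtain ⟨g, hg⟩ := hX _ (hv.insert fun b hb _ => hb)
  exact exists_inner_eq_of_isSimplicial hv hf' hg

theorem exists_gram_eq_submatrix_of_isClique [Finite V] {X Y : Matrix V V 𝕜}
    (hY : Y.PosSemidef) (hdiag : ∀ i, Y i i = X i i) (hadj : ∀ i j, G.Adj i j → Y i j = X i j)
    (hr : ∀ C : Finset V, IsMaxClique G C →
      (X.submatrix (fun c : C => (c : V)) (fun c : C => (c : V))).rank ≤ finrank 𝕜 E)
    {s : Set V} (hs : G.IsClique s) : ∃ g : s → E, gram 𝕜 g = X.submatrix (↑) (↑) := by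
  obtain ⟨C, hsC, hC⟩ := exists_isMaxClique_superset hs
  have hpsd := hY.submatrix (fun c : C => (c : V))
  rw [submatrix_eq_of_isClique hdiag hadj hC.1] at hpsd
  obtain ⟨g, hg⟩ := hpsd.exists_gram_eq (hr C hC)
  refine ⟨g ∘ Set.inclusion hsC, ?_⟩
  rw [show gram 𝕜 (g ∘ Set.inclusion hsC) = (gram 𝕜 g).submatrix _ _ from rfl, hg]
  rfl

end Realization

theorem dancis_min_rank_completion_general {n : ℕ} (G : SimpleGraph (Fin n)) (hG : IsChordal G)
    (X : Matrix (Fin n) (Fin n) ℝ) (h : HasPSDCompletion G X) :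
    ∃ Y : Matrix (Fin n) (Fin n) ℝ, Y.PosSemidef ∧ (∀ i, Y i i = X i i) ∧
      (∀ i j, G.Adj i j → Y i j = X i j) ∧
      Y.rank = ⨆ C : {C : Finset (Fin n) // IsMaxClique G (C : Set (Fin n))},
        (X.submatrix (fun c : {x // x ∈ C.val} => (c : Fin n))
          (fun c : {x // x ∈ C.val} => (c : Fin n))).rank := by
  obtain ⟨Y₀, hY₀, hdiag₀, hadj₀⟩ := h
  set r := ⨆ C : {C : Finset (Fin n) // IsMaxClique G (C : Set (Fin n))},
    (X.submatrix (fun c : {x // x ∈ C.val} => (c : Fin n))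
      (fun c : {x // x ∈ C.val} => (c : Fin n))).rank
  have hle : ∀ C : {C : Finset (Fin n) // IsMaxClique G (C : Set (Fin n))},
      (X.submatrix (fun c : {x // x ∈ C.val} => (c : Fin n))
        (fun c : {x // x ∈ C.val} => (c : Fin n))).rank ≤ r :=
    le_ciSup (Set.finite_range _).bddAbove
  have hr : ∀ C : Finset (Fin n), IsMaxClique G C →
      (X.submatrix (fun c : C => (c : Fin n)) (fun c : C => (c : Fin n))).rank ≤
        finrank ℝ (EuclideanSpace ℝ (Fin r)) := fun C hC => by
    simpa using hle ⟨C, hC⟩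
  obtain ⟨f, hf⟩ := hG.exists_inner_eq fun s hs =>
    exists_gram_eq_submatrix_of_isClique hY₀ hdiag₀ hadj₀ hr hs
  have hdiag : ∀ i, gram ℝ f i i = X i i := fun i => hf i i (.inl rfl)
  have hadj : ∀ i j, G.Adj i j → gram ℝ f i j = X i j := fun i j hij => hf i j (.inr hij)
  refine ⟨gram ℝ f, posSemidef_gram ℝ f, hdiag, hadj, le_antisymm ?_ ?_⟩
  · simpa using rank_gram_le (𝕜 := ℝ) f
  · obtain ⟨C, -, hC⟩ := exists_isMaxClique_superset G.isClique_empty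
    have : Nonempty {C : Finset (Fin n) // IsMaxClique G (C : Set (Fin n))} := ⟨⟨C, hC⟩⟩
    refine ciSup_le fun C => ?_
    rw [← submatrix_eq_of_isClique hdiag hadj C.2.1]
    exact rank_submatrix_le _ _ _

/-- Dancis' minimum-rank PSD completion theorem: if a partial symmetric matrix `X` with
chordal sparsity pattern `G` admits a PSD completion, then it admits a PSD completion
whose rank equals the maximum over all maximal cliques `C` of `rank X[C, C]`. -/
theorem dancis_min_rank_completion {n : ℕ} (G : SimpleGraph (Fin n)) (hG : IsChordal G)
    (X : Matrix (Fin n) (Fin n) ℝ) (hsymm : X.IsSymm) (h : HasPSDCompletion G X) :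
    ∃ Y : Matrix (Fin n) (Fin n) ℝ, Y.PosSemidef ∧ (∀ i, Y i i = X i i) ∧
      (∀ i j, G.Adj i j → Y i j = X i j) ∧
      Y.rank = ⨆ C : {C : Finset (Fin n) // IsMaxClique G (C : Set (Fin n))},
        (X.submatrix (fun c : {x // x ∈ C.val} => (c : Fin n))
          (fun c : {x // x ∈ C.val} => (c : Fin n))).rank :=
  dancis_min_rank_completion_general G hG X h
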